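/- (Characterization of exact natural latent existence, two variables) A nontrivial exact natural latent over X₁, X₂ exists if and only if there exist functions f₁, f₂ such that f₁(X₁) = f₂(X₂) almost surely and X₁ ⊥ X₂ given the common value f₁(X₁). In that case Λ := f₁(X₁) is a natural latent. -/
import Mathlib


open scoped Classical BigOperators

universe u v

noncomputable section

/-- Probability of an event under a mass function `p` on a finite sample space. -/
def prob {Ω : Type*} [Fintype Ω] (p : Ω → ℝ) (E : Ω → Prop) : ℝ :=
  ∑ ω, if E ω then p ω else 0

/-- `X₁` and `X₂` are conditionally independent given `Λ`. -/
def Mediates {Ω : Type*} {α β γ : Type*} [Fintype Ω]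
    (p : Ω → ℝ) (X1 : Ω → α) (X2 : Ω → β) (L : Ω → γ) : Prop :=
  ∀ x1 x2 l,
    prob p (fun ω => X1 ω = x1 ∧ X2 ω = x2 ∧ L ω = l) * prob p (fun ω => L ω = l)
      = prob p (fun ω => X1 ω = x1 ∧ L ω = l) * prob p (fun ω => X2 ω = x2 ∧ L ω = l)

theorem prob_congr {Ω : Type*} [Fintype Ω] (p : Ω → ℝ) {E F : Ω → Prop}
    (h : ∀ ω, p ω ≠ 0 → (E ω ↔ F ω)) : prob p E = prob p F := by
  unfold prob
  apply Finset.sum_congr rfl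
  intro ω _
  by_cases hz : p ω = 0
  · simp [hz]
  · simp [h ω hz]

/-- Characterization of exact natural latent existence (two variables): a
(nontrivial) exact natural latent over X₁, X₂ exists iff there are functions
f₁, f₂ with f₁(X₁) = f₂(X₂) almost surely and X₁ ⊥ X₂ given the common value
f₁(X₁); in that case Λ := f₁(X₁) is itself a natural latent (the right-hand side
states exactly that Λ := f₁(X₁) satisfies the natural latent conditions). -/
theorem natural_latent_existence_characterization
    {Ω : Type u} {α β : Type u} [Fintype Ω] [Fintype α] [Fintype β]
    (p : Ω → ℝ) (hp : ∀ ω, 0 ≤ p ω) (hsum : ∑ ω, p ω = 1)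
    (X1 : Ω → α) (X2 : Ω → β) :
    (∃ (γ : Type u) (L : Ω → γ),
        Mediates p X1 X2 L ∧
        (∃ f1 : α → γ, ∀ ω, p ω ≠ 0 → L ω = f1 (X1 ω)) ∧
        (∃ f2 : β → γ, ∀ ω, p ω ≠ 0 → L ω = f2 (X2 ω)))
      ↔ (∃ (γ : Type u) (f1 : α → γ) (f2 : β → γ),
          (∀ ω, p ω ≠ 0 → f1 (X1 ω) = f2 (X2 ω)) ∧
          Mediates p X1 X2 (fun ω => f1 (X1 ω))) := by
  constructor
  · rintro ⟨γ, L, hmed, ⟨f1, hf1⟩, ⟨f2, hf2⟩⟩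
    refine ⟨γ, f1, f2, fun ω hω => ((hf1 ω hω).symm.trans (hf2 ω hω)), ?_⟩
    intro x1 x2 l
    have e1 : prob p (fun ω => X1 ω = x1 ∧ X2 ω = x2 ∧ f1 (X1 ω) = l)
        = prob p (fun ω => X1 ω = x1 ∧ X2 ω = x2 ∧ L ω = l) :=
      prob_congr p (fun ω hω => by rw [hf1 ω hω])
    have e2 : prob p (fun ω => f1 (X1 ω) = l) = prob p (fun ω => L ω = l) :=
      prob_congr p (fun ω hω => by rw [hf1 ω hω])
    have e3 : prob p (fun ω => X1 ω = x1 ∧ f1 (X1 ω) = l)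
        = prob p (fun ω => X1 ω = x1 ∧ L ω = l) :=
      prob_congr p (fun ω hω => by rw [hf1 ω hω])
    have e4 : prob p (fun ω => X2 ω = x2 ∧ f1 (X1 ω) = l)
        = prob p (fun ω => X2 ω = x2 ∧ L ω = l) :=
      prob_congr p (fun ω hω => by rw [hf1 ω hω])
    rw [e1, e2, e3, e4]
    exact hmed x1 x2 l
  · rintro ⟨γ, f1, f2, heq, hmed⟩
    exact ⟨γ, fun ω => f1 (X1 ω), hmed, ⟨f1, fun ω _ => rfl⟩,
      ⟨f2, fun ω hω => heq ω hω⟩⟩
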